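/- Let β : ℝ → ℝ be smooth with β(s) = 0 for s ≤ 1/2 and β(s) = 1 for s ≥ 1, and let G : ℝ⁴ \ {0} → ℝ be smooth with ‖∇^j G(x)‖ ≤ ‖x‖^{−2−j} for j = 0, 1, 2 and all ‖x‖ ≥ 1 (∇^j denoting the j-th total derivative). For R ≥ 4 define u_R : ℝ⁴ → ℝ by u_R(x) = β(R^{−1/2}‖x‖) · G(x) for x ≠ 0 and u_R(0) = 0. Then u_R is smooth, and there is a constant C depending only on β (not on R or G) such that ‖∇² u_R(x)‖ ≤ C R^{−2} for all x ∈ ℝ⁴ and all R ≥ 4. -/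

import Mathlib

/-!
Since `β` vanishes near `0`, `φ t = β (√t)` is smooth and `u_R x = φ (‖x‖² / R) · G x`.
The cutoff vanishes for `‖x‖ < √R / 2`. For `‖x‖ ≥ √R / 2` the first two derivatives of
`x ↦ ‖x‖² / R` are `O(‖x‖ / R)` and `O(1 / R) = O((‖x‖ / R) ^ 2)`, so by Faà di Bruno the `i`-th
derivative of the cutoff is `O((‖x‖ / R) ^ i)`. By Leibniz, `∇² u_R` is a sum of terms
`(‖x‖ / R) ^ i · ‖x‖ ^ (i - 4)`, each `O(R⁻²)` because `‖x‖⁻² ≤ 4 / R`.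
-/

open Filter Set Topology

lemma eventuallyEq_zero_of_mul_norm_sq_lt {E : Type*} [SeminormedAddCommGroup E] {φ : ℝ → ℝ}
    {a c : ℝ} (hφ : ∀ t ≤ a, φ t = 0) {x : E} (hx : c * ‖x‖ ^ 2 < a) :
    (fun y => φ (c * ‖y‖ ^ 2)) =ᶠ[𝓝 x] 0 := by
  have hcont : Continuous fun y : E => c * ‖y‖ ^ 2 := by fun_prop
  filter_upwards [hcont.continuousAt.eventually_lt continuousAt_const hx] with y hy
  exact hφ _ hy.le

section

variable {E F A : Type*} [NormedAddCommGroup E] [NormedSpace ℝ E]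
  [NormedAddCommGroup F] [NormedSpace ℝ F] [NormedRing A] [NormedAlgebra ℝ A]

lemma norm_iteratedFDeriv_const_le (c : F) (n : ℕ) (x : E) :
    ‖iteratedFDeriv ℝ n (fun _ : E => c) x‖ ≤ ‖c‖ := by
  rcases n.eq_zero_or_pos with rfl | hn
  · rw [norm_iteratedFDeriv_zero]
  · simp [iteratedFDeriv_const_of_ne hn.ne']

lemma norm_iteratedFDeriv_mul_le_of_isOpen {f g : E → A} {s : Set E} {N : WithTop ℕ∞}
    (hs : IsOpen s) (hf : ContDiffOn ℝ N f s) (hg : ContDiffOn ℝ N g s) {x : E} (hx : x ∈ s)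
    {n : ℕ} (hn : n ≤ N) :
    ‖iteratedFDeriv ℝ n (fun y => f y * g y) x‖ ≤ ∑ i ∈ Finset.range (n + 1),
      (n.choose i : ℝ) * ‖iteratedFDeriv ℝ i f x‖ * ‖iteratedFDeriv ℝ (n - i) g x‖ := by
  simpa only [iteratedFDerivWithin_of_isOpen _ hs hx] using
    norm_iteratedFDerivWithin_mul_le hf hg hs.uniqueDiffOn hx hn

lemma contDiff_mul_of_eventuallyEq_zero {f g : E → A} {N : WithTop ℕ∞} {a : E}
    (hf : ContDiff ℝ N f) (hg : ContDiffOn ℝ N g {a}ᶜ) (hfa : f =ᶠ[𝓝 a] 0) :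
    ContDiff ℝ N fun y => f y * g y := by
  refine contDiff_iff_contDiffAt.2 fun y => ?_
  rcases eq_or_ne y a with rfl | hy
  · refine contDiffAt_const (c := (0 : A)).congr_of_eventuallyEq ?_
    filter_upwards [hfa] with z hz
    simp [hz]
  · exact hf.contDiffAt.mul (hg.contDiffAt (isOpen_compl_singleton.mem_nhds hy))

end

lemma exists_norm_iteratedFDeriv_le_of_const_off_Ioo {F : Type*} [NormedAddCommGroup F]
    [NormedSpace ℝ F] {f : ℝ → F} {n : ℕ} (hf : ContDiff ℝ n f) {a b : ℝ}
    (ha : ∀ t ≤ a, f t = f a) (hb : ∀ t, b ≤ t → f t = f b) :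
    ∃ C, ∀ i ≤ n, ∀ t, ‖iteratedFDeriv ℝ i f t‖ ≤ C := by
  have bound (i : ℕ) (hi : i ≤ n) : ∃ C, ∀ t, ‖iteratedFDeriv ℝ i f t‖ ≤ C := by
    obtain ⟨C, hC⟩ := isCompact_Icc.exists_bound_of_continuousOn (s := Icc a b)
      (hf.continuous_iteratedFDeriv (mod_cast hi)).continuousOn
    refine ⟨max C (max ‖f a‖ ‖f b‖), fun t => ?_⟩
    rcases lt_or_ge t a with hta | hat
    · have : f =ᶠ[𝓝 t] fun _ => f a := eventually_le_nhds hta |>.mono ha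
      rw [(this.iteratedFDeriv ℝ i).eq_of_nhds]
      exact (norm_iteratedFDeriv_const_le _ _ _).trans (by simp)
    rcases le_or_gt t b with htb | hbt
    · exact (hC t ⟨hat, htb⟩).trans (le_max_left _ _)
    · have : f =ᶠ[𝓝 t] fun _ => f b := eventually_ge_nhds hbt |>.mono hb
      rw [(this.iteratedFDeriv ℝ i).eq_of_nhds]
      exact (norm_iteratedFDeriv_const_le _ _ _).trans (by simp)
  choose! C hC using bound
  obtain ⟨M, hM⟩ := ((Finset.range (n + 1)).image C).bddAbove
  exact ⟨M, fun i hi t => (hC i hi t).trans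
    (hM (Finset.mem_coe.2 (Finset.mem_image_of_mem C (Finset.mem_range.2 (by omega)))))⟩

lemma contDiff_comp_sqrt_of_eq_zero {β : ℝ → ℝ} {n : WithTop ℕ∞} (hβ : ContDiff ℝ n β)
    {a : ℝ} (ha : 0 < a) (h0 : ∀ s ≤ a, β s = 0) : ContDiff ℝ n fun t => β √t := by
  refine contDiff_iff_contDiffAt.2 fun t => ?_
  rcases lt_or_ge t (a ^ 2) with ht | ht
  · refine contDiffAt_const (c := (0 : ℝ)).congr_of_eventuallyEq ?_
    filter_upwards [eventually_lt_nhds ht] with s hs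
    exact h0 _ ((Real.sqrt_le_left ha.le).2 hs.le)
  · exact hβ.contDiffAt.comp t (Real.contDiffAt_sqrt ((pow_pos ha 2).trans_le ht).ne')

lemma sqrt_inv_mul_sq_eq_rpow_mul {R r : ℝ} (hR : 0 ≤ R) (hr : 0 ≤ r) :
    √(R⁻¹ * r ^ 2) = R ^ (-(1 : ℝ) / 2) * r := by
  rw [Real.sqrt_mul (inv_nonneg.2 hR), Real.sqrt_sq hr, Real.sqrt_inv, Real.sqrt_eq_rpow,
    ← Real.rpow_neg hR, neg_div]

section

variable {E : Type*} [NormedAddCommGroup E] [InnerProductSpace ℝ E]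

lemma fderiv_const_mul_norm_sq (c : ℝ) :
    fderiv ℝ (fun y : E => c * ‖y‖ ^ 2) = ⇑((2 * c) • innerSL ℝ : E →L[ℝ] E →L[ℝ] ℝ) := by
  ext y v
  rw [(((hasStrictFDerivAt_norm_sq y).hasFDerivAt).const_mul c).fderiv]
  simp only [smul_apply, innerSL_apply_apply, smul_eq_mul]
  ring

lemma norm_smul_innerSL_le {c : ℝ} (hc : 0 ≤ c) :
    ‖(c • innerSL ℝ : E →L[ℝ] E →L[ℝ] ℝ)‖ ≤ c := by
  refine (ContinuousLinearMap.opNorm_smul_le c (innerSL ℝ)).trans ?_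
  rw [Real.norm_of_nonneg hc]
  exact mul_le_of_le_one_right hc (norm_innerSL_le ℝ)

lemma norm_iteratedFDeriv_one_const_mul_norm_sq_le {c : ℝ} (hc : 0 ≤ c) (x : E) :
    ‖iteratedFDeriv ℝ 1 (fun y : E => c * ‖y‖ ^ 2) x‖ ≤ 2 * c * ‖x‖ := by
  rw [norm_iteratedFDeriv_one, fderiv_const_mul_norm_sq]
  exact ContinuousLinearMap.le_of_opNorm_le _ (norm_smul_innerSL_le (by positivity)) x

lemma norm_iteratedFDeriv_two_const_mul_norm_sq_le {c : ℝ} (hc : 0 ≤ c) (x : E) :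
    ‖iteratedFDeriv ℝ 2 (fun y : E => c * ‖y‖ ^ 2) x‖ ≤ 2 * c := by
  rw [← norm_iteratedFDeriv_fderiv, fderiv_const_mul_norm_sq, norm_iteratedFDeriv_one,
    ContinuousLinearMap.fderiv]
  exact norm_smul_innerSL_le (by positivity)

lemma norm_iteratedFDeriv_comp_const_mul_norm_sq_le {φ : ℝ → ℝ} {n : ℕ} (hn : n ≤ 2)
    (hφ : ContDiff ℝ n φ) {c C : ℝ} (hc : 0 ≤ c) {x : E}
    (hC : ∀ i ≤ n, ‖iteratedFDeriv ℝ i φ (c * ‖x‖ ^ 2)‖ ≤ C) (hx : 1 ≤ 4 * c * ‖x‖ ^ 2) :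
    ‖iteratedFDeriv ℝ n (fun y => φ (c * ‖y‖ ^ 2)) x‖ ≤ n.factorial * C * (3 * c * ‖x‖) ^ n := by
  -- `3 c ‖x‖` dominates both `2 c ‖x‖` and `√(2 c)` because `c ‖x‖² ≥ 1/4`.
  refine norm_iteratedFDeriv_comp_le hφ (contDiff_const.mul (contDiff_norm_sq ℝ)) le_rfl x hC ?_
  intro i hi1 hin
  obtain rfl | rfl : i = 1 ∨ i = 2 := by omega
  · refine (norm_iteratedFDeriv_one_const_mul_norm_sq_le hc x).trans ?_
    nlinarith [mul_nonneg hc (norm_nonneg x)]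
  · refine (norm_iteratedFDeriv_two_const_mul_norm_sq_le hc x).trans ?_
    nlinarith

lemma norm_iteratedFDeriv_two_cutoff_mul_le_of_le {φ : ℝ → ℝ} (hφ : ContDiff ℝ 2 φ) {C : ℝ}
    (hC : ∀ i ≤ 2, ∀ t, ‖iteratedFDeriv ℝ i φ t‖ ≤ C) {G : E → ℝ} (hG : ContDiffOn ℝ 2 G {0}ᶜ)
    {R : ℝ} (hR : 0 < R) {x : E} (hx : R ≤ 4 * ‖x‖ ^ 2)
    (hGx : ∀ j ≤ 2, ‖iteratedFDeriv ℝ j G x‖ ≤ (‖x‖ ^ (2 + j))⁻¹) :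
    ‖iteratedFDeriv ℝ 2 (fun y => φ (R⁻¹ * ‖y‖ ^ 2) * G y) x‖ ≤ 58 * C * (R ^ 2)⁻¹ := by
  have hx0 : x ≠ 0 := by
    rintro rfl
    simp only [norm_zero] at hx
    linarith
  have hRx : 1 ≤ 4 * R⁻¹ * ‖x‖ ^ 2 := by
    rw [mul_right_comm, ← div_eq_mul_inv, le_div_iff₀ hR]; linarith
  have hψ (i : ℕ) (hi : i ≤ 2) := norm_iteratedFDeriv_comp_const_mul_norm_sq_le hi
    (hφ.of_le (mod_cast hi)) (inv_nonneg.2 hR.le) (fun j hj => hC j (hj.trans hi) _) hRx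
  have hψ_smooth : ContDiff ℝ 2 fun y : E => φ (R⁻¹ * ‖y‖ ^ 2) :=
    hφ.comp (contDiff_const.mul (contDiff_norm_sq ℝ))
  have hleib := norm_iteratedFDeriv_mul_le_of_isOpen isOpen_compl_singleton
    hψ_smooth.contDiffOn hG hx0 le_rfl
  have hb : (‖x‖ ^ 2)⁻¹ ≤ 4 * R⁻¹ := by
    rw [inv_le_iff_one_le_mul₀ (by positivity)]; linarith
  have hC0 : 0 ≤ C := (norm_nonneg _).trans (hC 0 (by norm_num) 0)
  calc _ ≤ _ := hleib
    _ ≤ ∑ i ∈ Finset.range 3, ((2).choose i : ℝ) * (i.factorial * C * (3 * R⁻¹ * ‖x‖) ^ i) *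
          (‖x‖ ^ (2 + (2 - i)))⁻¹ := by
      gcongr with i hi
      · exact hψ i (by simpa [Nat.lt_succ_iff] using hi)
      · exact hGx _ (Nat.sub_le 2 i)
    _ = C * ((‖x‖ ^ 2)⁻¹ ^ 2 + 6 * R⁻¹ * (‖x‖ ^ 2)⁻¹ + 18 * R⁻¹ ^ 2) := by
      simp only [Finset.sum_range_succ, Finset.sum_range_zero, Nat.factorial, Nat.choose]
      field_simp
      ring
    _ ≤ C * ((4 * R⁻¹) ^ 2 + 6 * R⁻¹ * (4 * R⁻¹) + 18 * R⁻¹ ^ 2) := by gcongr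
    _ = 58 * C * (R ^ 2)⁻¹ := by ring

lemma contDiff_cutoff_mul {φ : ℝ → ℝ} {G : E → ℝ} {N : WithTop ℕ∞} (hφ : ContDiff ℝ N φ)
    {a : ℝ} (ha : 0 < a) (hφ0 : ∀ t ≤ a, φ t = 0) (c : ℝ) (hG : ContDiffOn ℝ N G {0}ᶜ) :
    ContDiff ℝ N fun y => φ (c * ‖y‖ ^ 2) * G y :=
  contDiff_mul_of_eventuallyEq_zero (hφ.comp (contDiff_const.mul (contDiff_norm_sq ℝ))) hG
    (eventuallyEq_zero_of_mul_norm_sq_lt hφ0 (by simpa using ha))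

lemma norm_iteratedFDeriv_two_cutoff_mul_le {φ : ℝ → ℝ} (hφ : ContDiff ℝ 2 φ)
    (hφ0 : ∀ t ≤ 1 / 4, φ t = 0) {C : ℝ} (hC : ∀ i ≤ 2, ∀ t, ‖iteratedFDeriv ℝ i φ t‖ ≤ C)
    {G : E → ℝ} (hG : ContDiffOn ℝ 2 G {0}ᶜ)
    (hGdecay : ∀ j ≤ 2, ∀ x : E, 1 ≤ ‖x‖ → ‖iteratedFDeriv ℝ j G x‖ ≤ (‖x‖ ^ (2 + j))⁻¹)
    {R : ℝ} (hR : 4 ≤ R) (x : E) :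
    ‖iteratedFDeriv ℝ 2 (fun y => φ (R⁻¹ * ‖y‖ ^ 2) * G y) x‖ ≤ 58 * C * (R ^ 2)⁻¹ := by
  have hR0 : 0 < R := by linarith
  rcases lt_or_ge (R⁻¹ * ‖x‖ ^ 2) (1 / 4) with hx | hx
  · have hvanish : (fun y => φ (R⁻¹ * ‖y‖ ^ 2) * G y) =ᶠ[𝓝 x] 0 := by
      filter_upwards [eventuallyEq_zero_of_mul_norm_sq_lt hφ0 hx] with y hy
      simp [hy]
    have hC0 : 0 ≤ C := (norm_nonneg _).trans (hC 0 (by norm_num) 0)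
    rw [(hvanish.iteratedFDeriv ℝ 2).eq_of_nhds, iteratedFDeriv_zero, Pi.zero_apply, norm_zero]
    positivity
  · have hRx : R ≤ 4 * ‖x‖ ^ 2 := by
      rw [← div_eq_inv_mul, le_div_iff₀ hR0] at hx
      linarith
    refine norm_iteratedFDeriv_two_cutoff_mul_le_of_le hφ hC hG hR0 hRx
      fun j hj => hGdecay j hj x ?_
    nlinarith [norm_nonneg x]

end

/-- Let `β : ℝ → ℝ` be smooth with `β = 0` on `(-∞, 1/2]` and `β = 1` on
`[1, ∞)`. There is a constant `C` depending only on `β` such that: for every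
`G : ℝ⁴ \ {0} → ℝ` smooth with `‖∇ʲG(x)‖ ≤ ‖x‖^{-2-j}` for `j = 0,1,2` and `‖x‖ ≥ 1`, and
every `R ≥ 4`, the function `u_R(x) = β(R^{-1/2}‖x‖)·G(x)` (with `u_R(0) = 0`) is smooth
and satisfies `‖∇²u_R(x)‖ ≤ C·R⁻²` everywhere. -/
theorem stmt17 (β : ℝ → ℝ) (hβ : ContDiff ℝ (⊤ : ℕ∞) β)
    (hβ0 : ∀ s : ℝ, s ≤ 1 / 2 → β s = 0) (hβ1 : ∀ s : ℝ, 1 ≤ s → β s = 1) :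
    ∃ C : ℝ, 0 < C ∧
      ∀ G : EuclideanSpace ℝ (Fin 4) → ℝ,
        ContDiffOn ℝ (⊤ : ℕ∞) G {x | x ≠ 0} →
        (∀ j : ℕ, j ≤ 2 → ∀ x : EuclideanSpace ℝ (Fin 4), 1 ≤ ‖x‖ →
          ‖iteratedFDeriv ℝ j G x‖ ≤ (‖x‖ ^ (2 + j))⁻¹) →
        ∀ R : ℝ, 4 ≤ R →
        ∀ uR : EuclideanSpace ℝ (Fin 4) → ℝ,
          (uR 0 = 0 ∧ ∀ x : EuclideanSpace ℝ (Fin 4), x ≠ 0 →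
            uR x = β (R ^ (-(1 : ℝ) / 2) * ‖x‖) * G x) →
          ContDiff ℝ (⊤ : ℕ∞) uR ∧
          ∀ x : EuclideanSpace ℝ (Fin 4),
            ‖iteratedFDeriv ℝ 2 uR x‖ ≤ C * R ^ (-(2 : ℝ)) := by
  set φ : ℝ → ℝ := fun t => β √t
  have hφ : ContDiff ℝ (⊤ : ℕ∞) φ := contDiff_comp_sqrt_of_eq_zero hβ one_half_pos hβ0
  have hφ2 : ContDiff ℝ 2 φ := hφ.of_le (WithTop.coe_le_coe.2 le_top)
  have hφ0 : ∀ t ≤ 1 / 4, φ t = 0 := fun t ht =>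
    hβ0 _ ((Real.sqrt_le_left (by norm_num)).2 (by linarith))
  have hφ1 : ∀ t, 1 ≤ t → φ t = 1 := fun t ht => hβ1 _ (Real.one_le_sqrt.2 ht)
  obtain ⟨C, hC⟩ := exists_norm_iteratedFDeriv_le_of_const_off_Ioo hφ2
    (fun t ht => (hφ0 t ht).trans (hφ0 _ le_rfl).symm)
    (fun t ht => (hφ1 t ht).trans (hφ1 1 le_rfl).symm)
  have hC1 : 1 ≤ C := by simpa [hφ1 1 le_rfl] using hC 0 (by norm_num) 1
  refine ⟨58 * C, by linarith, fun G hG hGdecay R hR uR ⟨huR0, huR⟩ => ?_⟩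
  have hR0 : 0 < R := by linarith
  have huR_eq : uR = fun y => φ (R⁻¹ * ‖y‖ ^ 2) * G y := by
    funext y
    rcases eq_or_ne y 0 with rfl | hy
    · simp [huR0, hφ0 0 (by norm_num)]
    · rw [huR y hy, ← sqrt_inv_mul_sq_eq_rpow_mul hR0.le (norm_nonneg y)]
  subst huR_eq
  refine ⟨contDiff_cutoff_mul hφ (by norm_num) hφ0 R⁻¹ hG, fun x => ?_⟩
  rw [Real.rpow_neg hR0.le, Real.rpow_two]
  exact norm_iteratedFDeriv_two_cutoff_mul_le hφ2 hφ0 hC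
    (hG.of_le (WithTop.coe_le_coe.2 le_top)) hGdecay hR x
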